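/- For every α ∈ ℂ with Re α > 0 and Im α > 0 and every r > 0, one has H(α,r) = Re[ 2φ(α,r) − p(α) − q(α) + α·log α − (α−1)·log(α−1) ]. -/

import Mathlib

/-- `w α r = √(1 + α² sinh² r)` (principal branch). -/
noncomputable def w (α : ℂ) (r : ℝ) : ℂ :=
  (1 + α ^ 2 * (Real.sinh r : ℂ) ^ 2) ^ (1 / 2 : ℂ)

/-- `φ(α,r) = α log((α cosh r + w)/√(α²−1)) + (1/2) log((cosh r − w)/(cosh r + w))`
(principal branches). -/
noncomputable def phi (α : ℂ) (r : ℝ) : ℂ :=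
  α * Complex.log ((α * (Real.cosh r : ℂ) + w α r) / ((α ^ 2 - 1) ^ (1 / 2 : ℂ))) +
    (1 / 2 : ℂ) * Complex.log (((Real.cosh r : ℂ) - w α r) / ((Real.cosh r : ℂ) + w α r))
/-- `H(α,r) = Re[2α log(α cosh r + w) − α log(α²−1)]
  + log|(cosh r − w)/(cosh r + w)|` where `w = √(1 + α² sinh² r)`
(principal branches). -/
noncomputable def H (α : ℂ) (r : ℝ) : ℝ :=
  (2 * α * Complex.log (α * (Real.cosh r : ℂ) + w α r) -
      α * Complex.log (α ^ 2 - 1)).re +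
    Real.log ‖((Real.cosh r : ℂ) - w α r) / ((Real.cosh r : ℂ) + w α r)‖

/-- `p(α) = (α/2) log((α+1)/(α−1)) + (1/2) log(1−α²)` (principal branches). -/
noncomputable def pfun (α : ℂ) : ℂ :=
  (α / 2) * Complex.log ((α + 1) / (α - 1)) + (1 / 2 : ℂ) * Complex.log (1 - α ^ 2)

/-- `q(α) = α log(α/√(α²−1)) + (1/2) log((1−α)/(1+α))` (principal branches). -/
noncomputable def qfun (α : ℂ) : ℂ :=
  α * Complex.log (α / ((α ^ 2 - 1) ^ (1 / 2 : ℂ))) +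
    (1 / 2 : ℂ) * Complex.log ((1 - α) / (1 + α))


/-!
On the quadrant `0 < Re α`, `0 < Im α` every principal logarithm in `φ`, `p` and `q` whose
coefficient involves `α` has as argument a product or quotient of two numbers of the open upper
half-plane (`α ± 1`, `α`, `α cosh r + w`, `√(α² - 1)`), so it splits additively; together with
`log √z = (log z)/2` this makes all `α`-dependent terms cancel. The remaining terms carry the
coefficient `1/2` and only enter through `log |·|`, where `|1 - α²| · |(1 - α)/(1 + α)| = |α - 1|²`.
-/

open scoped Real

namespace Complex

lemma ne_zero_of_im_pos {z : ℂ} (h : 0 < z.im) : z ≠ 0 := by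
  rintro rfl
  simp at h

lemma arg_pos_of_im_pos {z : ℂ} (h : 0 < z.im) : 0 < arg z :=
  (arg_nonneg_iff.2 h.le).lt_of_ne fun h0 => h.ne' (arg_eq_zero_iff.1 h0.symm).2

lemma log_cpow_one_half (z : ℂ) : log (z ^ (1 / 2 : ℂ)) = log z / 2 := by
  rcases eq_or_ne z 0 with rfl | hz
  · simp
  have him : (log z / 2).im = arg z / 2 := by simp [log_im]
  rw [cpow_def_of_ne_zero hz, mul_one_div, log_exp] <;> rw [him]
  · linarith [neg_pi_lt_arg z, Real.pi_pos]
  · linarith [arg_le_pi z, Real.pi_pos]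

lemma arg_cpow_one_half (z : ℂ) : arg (z ^ (1 / 2 : ℂ)) = arg z / 2 := by
  simpa [log_im] using congrArg im (log_cpow_one_half z)

lemma im_cpow_one_half_nonneg {z : ℂ} (h : 0 ≤ z.im) : 0 ≤ (z ^ (1 / 2 : ℂ)).im := by
  rw [← arg_nonneg_iff, arg_cpow_one_half]
  have := arg_nonneg_iff.2 h
  positivity

lemma im_cpow_one_half_pos {z : ℂ} (h : 0 < z.im) : 0 < (z ^ (1 / 2 : ℂ)).im := by
  -- a real square root would have a real square
  refine (im_cpow_one_half_nonneg h.le).lt_of_ne fun h0 => h.ne' ?_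
  rw [← cpow_ofNat_inv_pow z 2, ← one_div, sq, mul_im, ← h0]
  simp

lemma log_mul_of_im_pos {x y : ℂ} (hx : 0 < x.im) (hy : 0 < y.im) (hxy : 0 < (x * y).im) :
    log (x * y) = log x + log y := by
  have hx₀ := ne_zero_of_im_pos hx
  have hy₀ := ne_zero_of_im_pos hy
  have hxy₀ := arg_pos_of_im_pos hxy
  refine log_mul hx₀ hy₀
    ⟨by linarith [arg_pos_of_im_pos hx, arg_pos_of_im_pos hy, Real.pi_pos], ?_⟩
  -- otherwise `arg (x * y) ≡ arg x + arg y` would force `arg (x * y) = arg x + arg y - 2π < 0`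
  by_contra! hgt
  have hmem : arg x + arg y - 2 * π ∈ Set.Ioc (-π) π :=
    ⟨by linarith, by linarith [arg_le_pi x, arg_le_pi y]⟩
  have : arg (x * y) = arg x + arg y - 2 * π := by
    rw [← Real.Angle.toReal_coe_eq_self_iff_mem_Ioc.2 hmem, Real.Angle.coe_sub,
      Real.Angle.coe_two_pi, sub_zero, Real.Angle.coe_add, ← arg_mul_coe_angle hx₀ hy₀,
      arg_coe_angle_toReal_eq_arg]
  linarith [arg_le_pi x, arg_le_pi y]

lemma log_div_of_im_pos {x y : ℂ} (hx : 0 < x.im) (hy : 0 < y.im) :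
    log (x / y) = log x - log y := by
  have hπ : arg y ≠ π := (arg_lt_pi_iff.2 (Or.inr hy.ne')).ne
  rw [div_eq_mul_inv, log_mul (ne_zero_of_im_pos hx) (inv_ne_zero (ne_zero_of_im_pos hy)),
    log_inv y hπ, sub_eq_add_neg]
  rw [arg_inv, if_neg hπ]
  constructor <;> linarith [arg_pos_of_im_pos hx, arg_pos_of_im_pos hy, arg_le_pi x, arg_le_pi y]

end Complex

open Complex

lemma im_sq_sub_one (α : ℂ) : (α ^ 2 - 1).im = 2 * α.re * α.im := by
  simp only [sq, sub_im, mul_im, one_im, sub_zero]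
  ring

lemma im_w_nonneg {α : ℂ} (hre : 0 ≤ α.re) (him : 0 ≤ α.im) (r : ℝ) : 0 ≤ (w α r).im := by
  refine im_cpow_one_half_nonneg ?_
  have : (1 + α ^ 2 * (Real.sinh r : ℂ) ^ 2).im = 2 * α.re * α.im * Real.sinh r ^ 2 := by
    simp only [sq, add_im, mul_im, mul_re, one_im, ofReal_re, ofReal_im]
    ring
  rw [this]
  positivity

lemma re_log_one_sub_sq_add_re_log_div {α : ℂ} (h₁ : 1 - α ≠ 0) (h₂ : 1 + α ≠ 0) :
    (log (1 - α ^ 2)).re + (log ((1 - α) / (1 + α))).re = 2 * (log (α - 1)).re := by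
  have hfac : 1 - α ^ 2 = (1 - α) * (1 + α) := by ring
  have hprod : (1 - α ^ 2) * ((1 - α) / (1 + α)) = (α - 1) ^ 2 := by
    field_simp
    ring
  simp only [log_re]
  rw [← Real.log_mul (norm_ne_zero_iff.2 (hfac ▸ mul_ne_zero h₁ h₂))
    (norm_ne_zero_iff.2 (div_ne_zero h₁ h₂)), ← norm_mul, hprod,
    norm_pow, Real.log_pow]
  norm_num

lemma two_phi_sub_pfun_sub_qfun_eq {α : ℂ} (hre : 0 < α.re) (him : 0 < α.im) (r : ℝ) :
    2 * phi α r - pfun α - qfun α + α * log α - (α - 1) * log (α - 1) =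
      2 * α * log (α * Real.cosh r + w α r) - α * log (α ^ 2 - 1) +
        log ((Real.cosh r - w α r) / (Real.cosh r + w α r)) + log (α - 1) -
          (log (1 - α ^ 2) + log ((1 - α) / (1 + α))) / 2 := by
  have hsq : 0 < (α ^ 2 - 1).im := by
    rw [im_sq_sub_one]
    positivity
  have hs : 0 < ((α ^ 2 - 1) ^ (1 / 2 : ℂ)).im := im_cpow_one_half_pos hsq
  have hA : 0 < (α * Real.cosh r + w α r).im := by
    have := im_w_nonneg hre.le him.le r
    have := Real.cosh_pos r
    simp only [add_im, mul_im, ofReal_re, ofReal_im, mul_zero]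
    positivity
  have hm : 0 < (α - 1).im := by simpa using him
  have hp : 0 < (α + 1).im := by simpa using him
  have hfac : log (α ^ 2 - 1) = log (α - 1) + log (α + 1) := by
    rw [show α ^ 2 - 1 = (α - 1) * (α + 1) by ring] at hsq ⊢
    exact log_mul_of_im_pos hm hp hsq
  rw [phi, pfun, qfun, log_div_of_im_pos hA hs, log_div_of_im_pos him hs,
    log_div_of_im_pos hp hm, log_cpow_one_half, hfac]
  ring

theorem H_eq_phi_p_q_general (α : ℂ) (hre : 0 < α.re) (him : 0 < α.im) (r : ℝ) :
    H α r = (2 * phi α r - pfun α - qfun α + α * Complex.log α -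
      (α - 1) * Complex.log (α - 1)).re := by
  have h₁ : 1 - α ≠ 0 := fun h => him.ne' (by simpa using congrArg im h)
  have h₂ : 1 + α ≠ 0 := ne_zero_of_im_pos (by simpa using him)
  rw [two_phi_sub_pfun_sub_qfun_eq hre him r, H, ← log_re]
  simp only [add_re, sub_re, div_ofNat_re]
  rw [re_log_one_sub_sq_add_re_log_div h₁ h₂]
  ring

/-- `H(α,r) = Re[2φ(α,r) − p(α) − q(α) + α log α − (α−1) log(α−1)]`. -/
theorem H_eq_phi_p_q (α : ℂ) (hre : 0 < α.re) (him : 0 < α.im) (r : ℝ) (hr : 0 < r) :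
    H α r = (2 * phi α r - pfun α - qfun α + α * Complex.log α -
      (α - 1) * Complex.log (α - 1)).re :=
  H_eq_phi_p_q_general α hre him r
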